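/- Let E be a finite-dimensional real inner product space and R an algebraic curvature tensor on E with signed sectional curvatures. If v, w ∈ E are orthonormal and R(w,v)v = 0, then for every t ∈ ℝ, writing c(t) = cos(t)·v + sin(t)·w and c'(t) = −sin(t)·v + cos(t)·w, one has R(c'(t), c(t)) c(t) = 0. In other words, the flat planes distribution v ↦ ker(J_v) ∩ v^⊥ on the unit sphere of E is totally geodesic: it is invariant along great circles. -/

import Mathlib

open scoped RealInnerProductSpace

/-- An algebraic curvature tensor on a real inner product space `E`: a multilinear map
`R : E × E × E × E → ℝ` with the symmetries of the Riemann curvature tensor.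
For vectors `x y z`, the value `R x y z ·` represents the linear functional
`w ↦ ⟨R(x,y)z, w⟩` determined by the curvature operator `R(x,y)z`. -/
structure AlgCurvTensor (E : Type*) [NormedAddCommGroup E] [InnerProductSpace ℝ E] where
  R : E →ₗ[ℝ] E →ₗ[ℝ] E →ₗ[ℝ] E →ₗ[ℝ] ℝ
  antisym_fst : ∀ x y z w : E, R x y z w = - R y x z w
  antisym_snd : ∀ x y z w : E, R x y z w = - R x y w z
  pair_symm : ∀ x y z w : E, R x y z w = R z w x y
  bianchi : ∀ x y z w : E, R x y z w + R y z x w + R z x y w = 0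

/-- `T` has signed sectional curvatures: either all sectional curvatures are `≥ 0`
or all are `≤ 0`. -/
def AlgCurvTensor.SignedSec {E : Type*} [NormedAddCommGroup E] [InnerProductSpace ℝ E]
    (T : AlgCurvTensor E) : Prop :=
  (∀ x y : E, ‖x‖ = 1 → ‖y‖ = 1 → ⟪x, y⟫ = 0 → 0 ≤ T.R x y y x) ∨
  (∀ x y : E, ‖x‖ = 1 → ‖y‖ = 1 → ⟪x, y⟫ = 0 → T.R x y y x ≤ 0)

/-!
If all sectional curvatures are `≥ 0` (the other sign case follows by passing to `-R`),
then `R(x, w, w, x) ≥ 0` for all `x, w` (by Gram–Schmidt and rescaling), so the Jacobi form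
`B(x, y) = R(x, w, w, y)` is positive semidefinite.
Since `B(v, v) = R(v, w, w, v) = R(w, v, v, w) = 0`, the vector `v` lies in the kernel of `B`,
that is `R(v, w)w = 0`. Together with `R(w, v)v = 0` this makes `R(x, y)z` vanish for all
`x, y, z` in the plane spanned by `v` and `w`, which contains the great circle and its velocity.
-/

theorem LinearMap.BilinForm.IsPosSemidef.apply_eq_zero_of_apply_self_eq_zero {K M : Type*}
    [Field K] [LinearOrder K] [IsStrictOrderedRing K] [AddCommGroup M] [Module K M]
    {B : LinearMap.BilinForm K M} (hB : B.IsPosSemidef) {v : M} (hv : B v v = 0) (u : M) :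
    B v u = 0 := by
  have hquad : ∀ t : K, 0 ≤ B u u * (t * t) + 2 * B v u * t + B v v := fun t ↦ by
    have := hB.isNonneg.nonneg (v + t • u)
    simp only [map_add, map_smul, LinearMap.add_apply, LinearMap.smul_apply, smul_eq_mul,
      hB.isSymm.eq u v] at this
    linear_combination this
  have := discrim_le_zero hquad
  rw [discrim, hv] at this
  nlinarith

namespace AlgCurvTensor

variable {E : Type*} [NormedAddCommGroup E] [InnerProductSpace ℝ E] (T : AlgCurvTensor E)

lemma R_self_fst (x z u : E) : T.R x x z u = 0 := by
  linarith [T.antisym_fst x x z u]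

lemma R_self_snd (x y z : E) : T.R x y z z = 0 := by
  linarith [T.antisym_snd x y z z]

instance : Neg (AlgCurvTensor E) where
  neg T :=
    { R := (-1 : ℝ) • T.R
      antisym_fst := fun x y z u ↦ by simp [T.antisym_fst x y z u]
      antisym_snd := fun x y z u ↦ by simp [T.antisym_snd x y z u]
      pair_symm := fun x y z u ↦ by simp [T.pair_symm x y z u]
      bianchi := fun x y z u ↦ by
        simp only [LinearMap.smul_apply, smul_eq_mul]
        linarith [T.bianchi x y z u] }

@[simp]
lemma neg_R_apply (x y z u : E) : (-T).R x y z u = -T.R x y z u := by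
  change ((-1 : ℝ) • T.R) x y z u = _
  simp

lemma R_smul_smul (a b : ℝ) (x y : E) :
    T.R (a • x) (b • y) (b • y) (a • x) = (a * b) ^ 2 * T.R x y y x := by
  simp only [map_smul, LinearMap.smul_apply, smul_eq_mul]
  ring

lemma R_add_smul_fst (c : ℝ) (x y : E) :
    T.R (x + c • y) y y (x + c • y) = T.R x y y x := by
  simp only [map_add, map_smul, LinearMap.add_apply, LinearMap.smul_apply, smul_eq_mul,
    R_self_fst, R_self_snd]
  ring

def jacobiForm (y : E) : LinearMap.BilinForm ℝ E := (T.R.flip y).flip y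

@[simp]
lemma jacobiForm_apply (y x z : E) : T.jacobiForm y x z = T.R x y y z := rfl

lemma isSymm_jacobiForm (y : E) : (T.jacobiForm y).IsSymm where
  eq x z := by
    rw [jacobiForm_apply, jacobiForm_apply, T.pair_symm x y y z, T.antisym_fst y z x y,
      T.antisym_snd z y x y, neg_neg]

lemma R_eq_zero_of_mem_span_pair {v w : E} (hvw : ∀ u : E, T.R v w w u = 0)
    (hwv : ∀ u : E, T.R w v v u = 0) {x y z : E} (hx : x ∈ Submodule.span ℝ {v, w})
    (hy : y ∈ Submodule.span ℝ {v, w}) (hz : z ∈ Submodule.span ℝ {v, w}) (u : E) :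
    T.R x y z u = 0 := by
  obtain ⟨a, b, rfl⟩ := Submodule.mem_span_pair.1 hx
  obtain ⟨c, d, rfl⟩ := Submodule.mem_span_pair.1 hy
  obtain ⟨e, f, rfl⟩ := Submodule.mem_span_pair.1 hz
  have hvwv : T.R v w v u = 0 := by rw [T.antisym_fst, hwv, neg_zero]
  have hwvw : T.R w v w u = 0 := by rw [T.antisym_fst, hvw, neg_zero]
  simp [R_self_fst, hvw, hwv, hvwv, hwvw]

variable {T}

section SecNonneg

variable (hsec : ∀ x y : E, ‖x‖ = 1 → ‖y‖ = 1 → ⟪x, y⟫ = 0 → 0 ≤ T.R x y y x)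
include hsec

lemma sec_nonneg_of_inner_eq_zero {x y : E} (hxy : ⟪x, y⟫ = 0) : 0 ≤ T.R x y y x := by
  rcases eq_or_ne x 0 with rfl | hx
  · simp
  rcases eq_or_ne y 0 with rfl | hy
  · simp
  have hxn : ‖x‖ ≠ 0 := norm_ne_zero_iff.2 hx
  have hyn : ‖y‖ ≠ 0 := norm_ne_zero_iff.2 hy
  have hunit := hsec (‖x‖⁻¹ • x) (‖y‖⁻¹ • y) (norm_smul_inv_norm hx) (norm_smul_inv_norm hy)
    (by simp [real_inner_smul_left, real_inner_smul_right, hxy])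
  have hscale := T.R_smul_smul ‖x‖ ‖y‖ (‖x‖⁻¹ • x) (‖y‖⁻¹ • y)
  rw [smul_inv_smul₀ hxn, smul_inv_smul₀ hyn] at hscale
  rw [hscale]
  positivity

lemma sec_nonneg (x y : E) : 0 ≤ T.R x y y x := by
  rcases eq_or_ne y 0 with rfl | hy
  · simp
  set c := ⟪x, y⟫ / ‖y‖ ^ 2
  have horth : ⟪x - c • y, y⟫ = 0 := by
    have : ‖y‖ ≠ 0 := norm_ne_zero_iff.2 hy
    simp only [inner_sub_left, real_inner_smul_left, real_inner_self_eq_norm_sq, c]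
    field_simp
    ring
  have := sec_nonneg_of_inner_eq_zero hsec horth
  rwa [sub_eq_add_neg, ← neg_smul, R_add_smul_fst] at this

lemma isPosSemidef_jacobiForm (y : E) : (T.jacobiForm y).IsPosSemidef where
  isSymm := T.isSymm_jacobiForm y
  isNonneg := ⟨fun x ↦ sec_nonneg hsec x y⟩

lemma R_swap_eq_zero_of_sec_nonneg {v w : E} (hker : ∀ u : E, T.R w v v u = 0) (u : E) :
    T.R v w w u = 0 :=
  (isPosSemidef_jacobiForm hsec w).apply_eq_zero_of_apply_self_eq_zero
    (by rw [jacobiForm_apply, T.pair_symm, hker]) u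

end SecNonneg

lemma SignedSec.R_swap_eq_zero (hT : T.SignedSec) {v w : E} (hker : ∀ u : E, T.R w v v u = 0)
    (u : E) : T.R v w w u = 0 := by
  rcases hT with hnonneg | hnonpos
  · exact R_swap_eq_zero_of_sec_nonneg hnonneg hker u
  · have hneg : ∀ x y : E, ‖x‖ = 1 → ‖y‖ = 1 → ⟪x, y⟫ = 0 → 0 ≤ (-T).R x y y x :=
      fun x y hx hy hxy ↦ by simpa using hnonpos x y hx hy hxy
    simpa using R_swap_eq_zero_of_sec_nonneg hneg (by simpa using hker) u

end AlgCurvTensor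

theorem flat_planes_distribution_totally_geodesic_general {E : Type*} [NormedAddCommGroup E]
    [InnerProductSpace ℝ E]
    (T : AlgCurvTensor E) (hsigned : T.SignedSec)
    (v w : E)
    (hker : ∀ u : E, T.R w v v u = 0) :
    ∀ t : ℝ, ∀ u : E,
      T.R (-(Real.sin t) • v + Real.cos t • w)
          (Real.cos t • v + Real.sin t • w)
          (Real.cos t • v + Real.sin t • w) u = 0 := by
  intro t u
  have hc : Real.cos t • v + Real.sin t • w ∈ Submodule.span ℝ {v, w} :=
    Submodule.mem_span_pair.2 ⟨_, _, rfl⟩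
  exact T.R_eq_zero_of_mem_span_pair (hsigned.R_swap_eq_zero hker) hker
    (Submodule.mem_span_pair.2 ⟨_, _, rfl⟩) hc hc u

/-- The flat planes distribution is totally geodesic: if `v, w` are orthonormal and
`R(w,v)v = 0` (i.e., `w ∈ ker J_v`, expressed by the vanishing of all inner products
`⟨R(w,v)v, u⟩ = R w v v u`), then along the great circle `c(t) = cos t • v + sin t • w`
with velocity `c'(t) = -sin t • v + cos t • w` one has `R(c'(t), c(t)) c(t) = 0`. -/
theorem flat_planes_distribution_totally_geodesic {E : Type*} [NormedAddCommGroup E]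
    [InnerProductSpace ℝ E] [FiniteDimensional ℝ E]
    (T : AlgCurvTensor E) (hsigned : T.SignedSec)
    (v w : E) (hv : ‖v‖ = 1) (hw : ‖w‖ = 1) (hvw : ⟪v, w⟫ = 0)
    (hker : ∀ u : E, T.R w v v u = 0) :
    ∀ t : ℝ, ∀ u : E,
      T.R (-(Real.sin t) • v + Real.cos t • w)
          (Real.cos t • v + Real.sin t • w)
          (Real.cos t • v + Real.sin t • w) u = 0 :=
  flat_planes_distribution_totally_geodesic_general T hsigned v w hker
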